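/- arXiv:2203.09323 — 2 statements merged into one kernel-verified Lean document; each statement's English description precedes it below -/
import Mathlib

section
/- Let m, n, i be positive natural numbers and let I_1, …, I_i be increasing monotonous polyominoes in R_{m×n}. Then there exist increasing monotonous polyominoes I'_1, …, I'_{i'} in R_{m×n} with i' ≤ i, all fully defined on {0,…,m}, such that the union of the cell sets of I_1,…,I_i is contained in the union of the cell sets of I'_1,…,I'_{i'}, and I'_1(m) > I'_2(m) > … > I'_{i'}(m). -/
/-- A monotonous polyomino in the lattice rectangle `R_{m×n}`, spanning columns
`r` to `s` (with `1 ≤ r ≤ s ≤ m`), encoded by a monotone function `P` taking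
values in `{1,…,n}` on `{r-1,…,s}`. -/
structure MonoPoly (m n : ℕ) where
  r : ℕ
  s : ℕ
  P : ℕ → ℕ
  one_le_r : 1 ≤ r
  r_le_s : r ≤ s
  s_le_m : s ≤ m
  val_mem : ∀ t, r - 1 ≤ t → t ≤ s → 1 ≤ P t ∧ P t ≤ n
  mono : (∀ t u, r - 1 ≤ t → t ≤ u → u ≤ s → P t ≤ P u) ∨
         (∀ t u, r - 1 ≤ t → t ≤ u → u ≤ s → P u ≤ P t)

/-- The cell set of a monotonous polyomino:
`{(t,j) : r ≤ t ≤ s, min(P(t-1),P(t)) ≤ j ≤ max(P(t-1),P(t))}`. -/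
def MonoPoly.cells {m n : ℕ} (Q : MonoPoly m n) : Set (ℕ × ℕ) :=
  {c | Q.r ≤ c.1 ∧ c.1 ≤ Q.s ∧
       min (Q.P (c.1 - 1)) (Q.P c.1) ≤ c.2 ∧
       c.2 ≤ max (Q.P (c.1 - 1)) (Q.P c.1)}

/-- A monotonous polyomino is increasing if its encoding function is
nondecreasing on `{r-1,…,s}`. -/
def MonoPoly.Increasing {m n : ℕ} (Q : MonoPoly m n) : Prop :=
  ∀ t u, Q.r - 1 ≤ t → t ≤ u → u ≤ Q.s → Q.P t ≤ Q.P u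

/-- A monotonous polyomino is decreasing if its encoding function is
nonincreasing on `{r-1,…,s}`. -/
def MonoPoly.Decreasing {m n : ℕ} (Q : MonoPoly m n) : Prop :=
  ∀ t u, Q.r - 1 ≤ t → t ≤ u → u ≤ Q.s → Q.P u ≤ Q.P t

/-- A monotonous polyomino is fully defined on `{0,…,m}` if `r = 1` and `s = m`. -/
def MonoPoly.Full {m n : ℕ} (Q : MonoPoly m n) : Prop :=
  Q.r = 1 ∧ Q.s = m

/-- `F` is a covering of `R_{m×n}` by `p` monotonous polyominoes: every cell
`(k,l)` with `1 ≤ k ≤ m`, `1 ≤ l ≤ n` belongs to some member of the family. -/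
def IsCovering (m n p : ℕ) (F : Fin p → MonoPoly m n) : Prop :=
  ∀ k l : ℕ, 1 ≤ k → k ≤ m → 1 ≤ l → l ≤ n → ∃ a, (k, l) ∈ (F a).cells

/-- An `(i,d)`-covering of `R_{m×n}`: `i` increasing and `d` decreasing
monotonous polyominoes whose cell sets together cover `{1,…,m}×{1,…,n}`. -/
def IsIDCovering (m n i d : ℕ) (F : Fin i → MonoPoly m n)
    (G : Fin d → MonoPoly m n) : Prop :=
  (∀ a, (F a).Increasing) ∧ (∀ b, (G b).Decreasing) ∧
  ∀ k l : ℕ, 1 ≤ k → k ≤ m → 1 ≤ l → l ≤ n →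
    (∃ a, (k, l) ∈ (F a).cells) ∨ (∃ b, (k, l) ∈ (G b).cells)

/-- The minimal number of monotonous polyominoes needed to cover `R_{m×n}`. -/
noncomputable def minCover (m n : ℕ) : ℕ :=
  sInf {p : ℕ | ∃ F : Fin p → MonoPoly m n, IsCovering m n p F}

/-- `m(n,i,d) ∈ ℕ∞`: the supremum of all `m` such that `R_{m×n}` admits an
`(i,d)`-covering. -/
noncomputable def mSup (n i d : ℕ) : ℕ∞ :=
  ⨆ m ∈ {m : ℕ | ∃ (F : Fin i → MonoPoly m n) (G : Fin d → MonoPoly m n),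
      IsIDCovering m n i d F G}, (m : ℕ∞)

/-- `f : ℕ → ℕ` encodes an increasing monotonous polyomino in `R_{m×n}` fully
defined on `{0,…,m}`: values in `{1,…,n}` and nondecreasing on `{0,…,m}`. -/
def IncFull (m n : ℕ) (f : ℕ → ℕ) : Prop :=
  (∀ t, t ≤ m → 1 ≤ f t ∧ f t ≤ n) ∧ (∀ t u, t ≤ u → u ≤ m → f t ≤ f u)

/-- The cell set of an increasing polyomino fully defined on `{0,…,m}`,
encoded by the nondecreasing function `f`. -/
def cellsFull (m : ℕ) (f : ℕ → ℕ) : Set (ℕ × ℕ) :=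
  {c | 1 ≤ c.1 ∧ c.1 ≤ m ∧ f (c.1 - 1) ≤ c.2 ∧ c.2 ≤ f c.1}

/-! Extend each polyomino by constants to all of `{0,…,m}`, and replace the family of staircases
`f₁,…,f_i` by its order statistics `g₀ ≥ g₁ ≥ ⋯`, `g_j(t)` being the `(j+1)`-th largest of the
values `f_a(t)`. These are again increasing staircases and they cover the cells of the `f_a`.
To make the endpoints `g_j(m)` strictly decreasing, cap `g_j` at the height
`e_j = min (g_j(m), e_{j-1} - 1)` and drop the staircases with `e_j = 0`: a cell of `g_j` cut off
by the cap lies at a height that is exactly the cap `e_{j'}` of an earlier staircase, which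
reaches that height in the same column. -/

theorem Nat.exists_le_forall_lt_iff_of_antitone {p : ℕ → Prop} (hp : Antitone p) (i : ℕ) :
    ∃ i' ≤ i, ∀ j, j < i' ↔ j < i ∧ p j := by
  classical
  have hex : ∃ j, j = i ∨ ¬p j := ⟨i, Or.inl rfl⟩
  refine ⟨Nat.find hex, Nat.find_le (Or.inl rfl), fun j => ?_⟩
  simp only [Nat.lt_find_iff, not_or, not_not]
  refine ⟨fun h => ⟨?_, (h j le_rfl).2⟩,
    fun ⟨hji, hpj⟩ j' hj' => ⟨(hj'.trans_lt hji).ne, hp hj' hpj⟩⟩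
  by_contra! hij
  exact (h i hij).1 rfl

namespace MonoPoly

variable {m n : ℕ} (Q : MonoPoly m n)

def extend : ℕ → ℕ := fun t => Q.P (max (Q.r - 1) (min t Q.s))

lemma extend_mem_Icc (t : ℕ) : Q.extend t ∈ Set.Icc 1 n :=
  Q.val_mem _ (le_max_left _ _) (max_le (by have := Q.r_le_s; omega) (min_le_right _ _))

variable {Q}

lemma Increasing.monotone_extend (hQ : Q.Increasing) : Monotone Q.extend := fun t u htu =>
  have := Q.r_le_s
  hQ _ _ (le_max_left _ _) (by omega) (max_le (by omega) (min_le_right _ _))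

lemma Increasing.cells_subset (hQ : Q.Increasing) : Q.cells ⊆ cellsFull m Q.extend := by
  rintro ⟨k, ℓ⟩ ⟨hrk, hks, hmin, hmax⟩
  have hr := Q.one_le_r
  have hsm := Q.s_le_m
  have hstep : Q.P (k - 1) ≤ Q.P k := hQ _ _ (by omega) (by omega) hks
  have hext : ∀ t, Q.r - 1 ≤ t → t ≤ Q.s → Q.extend t = Q.P t := fun t h₁ h₂ => by
    simp only [extend, min_eq_left h₂, max_eq_right h₁]
  rw [min_eq_left hstep] at hmin
  rw [max_eq_right hstep] at hmax
  exact ⟨by omega, by omega, by rwa [hext _ (by omega) (by omega)],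
    by rwa [hext _ (by omega) hks]⟩

end MonoPoly

section KthLargest

open Finset

variable {ι : Type*} [Fintype ι] (f : ι → ℕ → ℕ)

def countGE (t ℓ : ℕ) : ℕ := #{a | ℓ ≤ f a t}

/-- The `(j+1)`-th largest of the values `f a t`, with multiplicity; it is `0` once
`j ≥ Fintype.card ι`. -/
noncomputable def kthLargest (j t : ℕ) : ℕ := sSup {ℓ | j + 1 ≤ countGE f t ℓ}

variable {f}

lemma countGE_antitone (t : ℕ) : Antitone (countGE f t) := fun _ _ h =>
  card_le_card (monotone_filter_right _ fun _ _ ha => h.trans ha)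

lemma countGE_mono (hf : ∀ a, Monotone (f a)) {t u : ℕ} (htu : t ≤ u) (ℓ : ℕ) :
    countGE f t ℓ ≤ countGE f u ℓ :=
  card_le_card (monotone_filter_right _ fun a _ ha => ha.trans (hf a htu))

lemma bddAbove_kthLargest_set (j t : ℕ) : BddAbove {ℓ | j + 1 ≤ countGE f t ℓ} := by
  refine ⟨univ.sup fun a => f a t, fun ℓ hℓ => ?_⟩
  obtain ⟨a, ha⟩ := card_pos.mp (Nat.succ_pos j |>.trans_le hℓ)
  exact (mem_filter.mp ha).2.trans (le_sup (f := fun a => f a t) (mem_univ a))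

lemma le_kthLargest_iff {j : ℕ} (hj : j < Fintype.card ι) {t ℓ : ℕ} :
    ℓ ≤ kthLargest f j t ↔ j + 1 ≤ countGE f t ℓ := by
  have hne : {ℓ | j + 1 ≤ countGE f t ℓ}.Nonempty := ⟨0, by simpa [countGE] using hj⟩
  refine ⟨fun h => (Nat.sSup_mem hne (bddAbove_kthLargest_set j t)).trans
    (countGE_antitone t h), le_csSup (bddAbove_kthLargest_set j t)⟩

lemma kthLargest_le_of_forall_le {t c : ℕ} (h : ∀ a, f a t ≤ c) (j : ℕ) :
    kthLargest f j t ≤ c := by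
  refine csSup_le' fun ℓ hℓ => ?_
  obtain ⟨a, ha⟩ := card_pos.mp (Nat.succ_pos j |>.trans_le hℓ)
  exact (mem_filter.mp ha).2.trans (h a)

lemma le_kthLargest_of_forall_le {j : ℕ} (hj : j < Fintype.card ι) {t c : ℕ}
    (h : ∀ a, c ≤ f a t) : c ≤ kthLargest f j t := by
  rw [le_kthLargest_iff hj, countGE, filter_true_of_mem fun a _ => h a]
  exact hj

lemma kthLargest_antitone (t : ℕ) : Antitone fun j => kthLargest f j t := fun _ _ h =>
  csSup_le_csSup' (bddAbove_kthLargest_set _ t) fun _ hℓ => (Nat.succ_le_succ h).trans hℓ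

lemma monotone_kthLargest (hf : ∀ a, Monotone (f a)) (j : ℕ) : Monotone (kthLargest f j) :=
  fun _ _ htu => csSup_le_csSup' (bddAbove_kthLargest_set j _) fun ℓ hℓ =>
    hℓ.trans (countGE_mono hf htu ℓ)

/-- A cell at height `ℓ` of the staircase `f a` lies on the `c`-th largest staircase, where `c` is
the number of staircases reaching height `ℓ` at its column. -/
lemma exists_mem_cellsFull_kthLargest (hf : ∀ a, Monotone (f a)) {m k ℓ : ℕ} {a : ι}
    (hc : (k, ℓ) ∈ cellsFull m (f a)) :
    ∃ j < Fintype.card ι, (k, ℓ) ∈ cellsFull m (kthLargest f j) := by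
  obtain ⟨hk, hkm, hlow, hhigh⟩ := hc
  dsimp only at hk hkm hlow hhigh
  set c := countGE f k ℓ
  have hc_pos : 0 < c := card_pos.mpr ⟨a, mem_filter.mpr ⟨mem_univ a, hhigh⟩⟩
  have hc_le : c ≤ Fintype.card ι := card_le_univ _
  have hj : c - 1 < Fintype.card ι := by omega
  have hbelow : countGE f (k - 1) (ℓ + 1) < c := by
    refine card_lt_card ((ssubset_iff_of_subset fun b hb => ?_).mpr ⟨a, ?_, ?_⟩)
    · simp only [mem_filter, mem_univ, true_and] at hb ⊢
      exact (Nat.le_succ ℓ).trans (hb.trans (hf b (Nat.sub_le k 1)))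
    · exact mem_filter.mpr ⟨mem_univ a, hhigh⟩
    · simp only [mem_filter, mem_univ, true_and, not_le]
      exact Nat.lt_succ_of_le hlow
  refine ⟨c - 1, hj, hk, hkm, ?_, ?_⟩
  · change kthLargest f (c - 1) (k - 1) ≤ ℓ
    by_contra! h
    have := (le_kthLargest_iff hj (ℓ := ℓ + 1)).mp h
    omega
  · change ℓ ≤ kthLargest f (c - 1) k
    rw [le_kthLargest_iff hj]
    omega

end KthLargest

section Capping

variable (g : ℕ → ℕ → ℕ) (m : ℕ)

def capHeight : ℕ → ℕ
  | 0 => g 0 m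
  | j + 1 => min (g (j + 1) m) (capHeight j - 1)

def capped (j t : ℕ) : ℕ := min (g j t) (capHeight g m j)

variable {g m}

lemma capHeight_le (j : ℕ) : capHeight g m j ≤ g j m := by
  cases j with
  | zero => exact le_rfl
  | succ j => exact min_le_left _ _

lemma capHeight_succ_le (j : ℕ) : capHeight g m (j + 1) ≤ capHeight g m j - 1 :=
  min_le_right _ _

lemma capHeight_succ_lt {j : ℕ} (h : 0 < capHeight g m j) :
    capHeight g m (j + 1) < capHeight g m j :=
  (capHeight_succ_le j).trans_lt (Nat.sub_lt h one_pos)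

lemma capHeight_antitone : Antitone (capHeight g m) :=
  antitone_nat_of_succ_le fun j => (capHeight_succ_le j).trans (Nat.sub_le _ _)

lemma capped_apply_right (j : ℕ) : capped g m j m = capHeight g m j :=
  min_eq_right (capHeight_le j)

lemma monotone_capped {j : ℕ} (hg : Monotone (g j)) : Monotone (capped g m j) :=
  fun _ _ h => min_le_min_right _ (hg h)

lemma exists_capHeight_eq (hmono : ∀ j, Monotone (g j)) (hanti : ∀ t, Antitone fun j => g j t)
    {k ℓ : ℕ} (hk : k ≤ m) :
    ∀ j, ℓ ≤ g j k → capHeight g m j < ℓ → ∃ j' < j, capHeight g m j' = ℓ ∧ ℓ ≤ g j' k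
  | 0, hℓ, hcap => absurd hcap (not_lt.mpr (hℓ.trans (hmono 0 hk)))
  | j + 1, hℓ, hcap => by
    have hℓ' : ℓ ≤ g j k := hℓ.trans (hanti k j.le_succ)
    have hprev : capHeight g m j ≤ ℓ := by
      have hℓm : ℓ ≤ g (j + 1) m := hℓ.trans (hmono _ hk)
      have hcap' : min (g (j + 1) m) (capHeight g m j - 1) < ℓ := hcap
      omega
    rcases hprev.lt_or_eq with hlt | heq
    · obtain ⟨j', hj', h⟩ := exists_capHeight_eq hmono hanti hk j hℓ' hlt
      exact ⟨j', hj'.trans j.lt_succ_self, h⟩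
    · exact ⟨j, j.lt_succ_self, heq, hℓ'⟩

lemma exists_mem_cellsFull_capped (hmono : ∀ j, Monotone (g j))
    (hanti : ∀ t, Antitone fun j => g j t) {j k ℓ : ℕ} (hc : (k, ℓ) ∈ cellsFull m (g j)) :
    ∃ j' ≤ j, (k, ℓ) ∈ cellsFull m (capped g m j') := by
  obtain ⟨hk, hkm, hlow, hhigh⟩ := hc
  by_cases hcap : ℓ ≤ capHeight g m j
  · exact ⟨j, le_rfl, hk, hkm, (min_le_left _ _).trans hlow, le_min hhigh hcap⟩
  · obtain ⟨j', hj', heq, hℓ⟩ :=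
      exists_capHeight_eq hmono hanti hkm j hhigh (not_le.mp hcap)
    exact ⟨j', hj'.le, hk, hkm, (min_le_right _ _).trans heq.le, le_min hℓ heq.ge⟩

end Capping

theorem stmt7_general (m n i : ℕ)
    (I : Fin i → MonoPoly m n) (hI : ∀ a, (I a).Increasing) :
    ∃ i' : ℕ, i' ≤ i ∧ ∃ Q : Fin i' → (ℕ → ℕ),
      (∀ a, IncFull m n (Q a)) ∧
      ((⋃ a, (I a).cells) ⊆ ⋃ a, cellsFull m (Q a)) ∧
      (∀ a b : Fin i', a < b → Q b m < Q a m) := by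
  set f : Fin i → ℕ → ℕ := fun a => (I a).extend
  have hf : ∀ a, Monotone (f a) := fun a => (hI a).monotone_extend
  set g := kthLargest f
  have hmono : ∀ j, Monotone (g j) := monotone_kthLargest hf
  have hg_pos : ∀ j < i, ∀ t, 1 ≤ g j t := fun j hj t =>
    le_kthLargest_of_forall_le (by simpa using hj) fun a => ((I a).extend_mem_Icc t).1
  obtain ⟨i', hi', hlt⟩ := Nat.exists_le_forall_lt_iff_of_antitone
    (p := fun j => 0 < capHeight g m j) (fun _ _ h hpos => hpos.trans_le (capHeight_antitone h)) i
  refine ⟨i', hi', fun j => capped g m j, fun j => ⟨fun t _ => ⟨?_, ?_⟩, fun t u htu _ =>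
    monotone_capped (hmono j) htu⟩, ?_, fun a b hab => ?_⟩
  · obtain ⟨hji, hpos⟩ := (hlt j).mp j.2
    exact le_min (hg_pos j hji t) hpos
  · exact (min_le_left _ _).trans
      (kthLargest_le_of_forall_le (fun a => ((I a).extend_mem_Icc t).2) j)
  · refine Set.iUnion_subset fun a ⟨k, ℓ⟩ hc => ?_
    obtain ⟨j, hj, hcj⟩ := exists_mem_cellsFull_kthLargest hf ((hI a).cells_subset hc)
    obtain ⟨j', hj'j, hcj'⟩ := exists_mem_cellsFull_capped hmono kthLargest_antitone hcj
    rw [Fintype.card_fin] at hj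
    have hpos : 0 < capHeight g m j' :=
      ((hg_pos j hj _).trans hcj.2.2.1).trans (hcj'.2.2.2.trans (min_le_right _ _))
    exact Set.mem_iUnion.mpr ⟨⟨j', (hlt j').mpr ⟨hj'j.trans_lt hj, hpos⟩⟩, hcj'⟩
  · simp only [capped_apply_right]
    exact (capHeight_antitone (show (a : ℕ) + 1 ≤ b from hab)).trans_lt
      (capHeight_succ_lt ((hlt a).mp a.2).2)

/-- Given increasing polyominoes `I₁,…,I_i ⊆ R_{m×n}`, there are increasing
polyominoes `I'₁,…,I'_{i'}` (with `i' ≤ i`), fully defined on `{0,…,m}`,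
covering all of them, with `I'₁(m) > I'₂(m) > … > I'_{i'}(m)`. -/
theorem stmt7 (m n i : ℕ) (hm : 1 ≤ m) (hn : 1 ≤ n) (hi : 1 ≤ i)
    (I : Fin i → MonoPoly m n) (hI : ∀ a, (I a).Increasing) :
    ∃ i' : ℕ, i' ≤ i ∧ ∃ Q : Fin i' → (ℕ → ℕ),
      (∀ a, IncFull m n (Q a)) ∧
      ((⋃ a, (I a).cells) ⊆ ⋃ a, cellsFull m (Q a)) ∧
      (∀ a b : Fin i', a < b → Q b m < Q a m) :=
  stmt7_general m n i I hI
end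

section
/- Let m, n, i, d be natural numbers with m, n ≥ 1 and n ≥ i + d. If R_{m×n} admits an (i,d)-covering, then R_{m×n} admits an (i,d)-covering consisting of increasing polyominoes I_1, …, I_i and decreasing polyominoes D_1, …, D_d, all fully defined on {0,…,m}, such that I_j(0) = j for 1 ≤ j ≤ i and D_k(0) = n + 1 − k for 1 ≤ k ≤ d. -/
/-! Extend every polyomino to `{0,…,m}` and sort the values of the increasing ones column by
column (order statistics): this keeps them increasing and keeps everything covered, since a point
`x` of the vertical segment of some polyomino over column `t` lies on the segment of the order
statistic whose index is the number of polyominoes strictly below `x` at `t`. Pushing all of them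
down to height `1` at `t = 0` and then raising the `j`-th order statistic to at least `j + 1`
normalizes the starting heights without uncovering anything. Decreasing polyominoes are handled
by the reflection `l ↦ n + 1 - l`. -/

open Finset

section OrderStatistic

variable {ι : Type*} [Fintype ι] (f : ι → ℕ → ℕ)

/-- The `j`-th smallest (counting from `0`, with multiplicity) of the values `f a t`. -/
noncomputable def orderStat (j t : ℕ) : ℕ :=
  sInf {x | j < #{a | f a t ≤ x}}

variable {f}

theorem orderStat_le_iff {j : ℕ} (hj : j < Fintype.card ι) {t x : ℕ} :
    orderStat f j t ≤ x ↔ j < #{a | f a t ≤ x} := by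
  refine ⟨fun h => ?_, fun h => Nat.sInf_le h⟩
  have hne : {x | j < #{a | f a t ≤ x}}.Nonempty := by
    refine ⟨univ.sup fun a => f a t, ?_⟩
    rwa [Set.mem_ofPred_eq, filter_true_of_mem fun a ha => le_sup (f := fun a => f a t) ha,
      card_univ]
  exact (Nat.sInf_mem hne).trans_le <|
    card_le_card (monotone_filter_right _ fun _ _ ha => ha.trans h)

theorem orderStat_lt_iff {j : ℕ} (hj : j < Fintype.card ι) {t x : ℕ} :
    orderStat f j t < x ↔ j < #{a | f a t < x} := by
  cases x with
  | zero => simp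
  | succ x => simp only [Nat.lt_succ_iff, orderStat_le_iff hj]

theorem orderStat_mono_index {j j' : ℕ} (hjj' : j ≤ j') (hj' : j' < Fintype.card ι) (t : ℕ) :
    orderStat f j t ≤ orderStat f j' t :=
  (orderStat_le_iff (hjj'.trans_lt hj')).2 (hjj'.trans_lt ((orderStat_le_iff hj').1 le_rfl))

theorem orderStat_le_orderStat {j : ℕ} (hj : j < Fintype.card ι) {t u : ℕ}
    (h : ∀ a, f a t ≤ f a u) : orderStat f j t ≤ orderStat f j u :=
  (orderStat_le_iff hj).2 <| ((orderStat_le_iff hj).1 le_rfl).trans_le <|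
    card_le_card (monotone_filter_right _ fun a _ ha => (h a).trans ha)

theorem orderStat_le_of_forall_le {j : ℕ} (hj : j < Fintype.card ι) {t x : ℕ}
    (h : ∀ a, f a t ≤ x) : orderStat f j t ≤ x := by
  rwa [orderStat_le_iff hj, filter_true_of_mem fun a _ => h a, card_univ]

theorem le_orderStat_of_forall_le {j : ℕ} (hj : j < Fintype.card ι) {t x : ℕ}
    (h : ∀ a, x ≤ f a t) : x ≤ orderStat f j t := by
  by_contra! hlt
  rw [orderStat_lt_iff hj, filter_false_of_mem fun a _ => (h a).not_gt] at hlt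
  exact Nat.not_lt_zero _ hlt

theorem incFull_orderStat {m n j : ℕ} (hf : ∀ a, IncFull m n (f a))
    (hj : j < Fintype.card ι) : IncFull m n (orderStat f j) :=
  ⟨fun t ht => ⟨le_orderStat_of_forall_le hj fun a => ((hf a).1 t ht).1,
      orderStat_le_of_forall_le hj fun a => ((hf a).1 t ht).2⟩,
    fun t u htu hum => orderStat_le_orderStat hj fun a => (hf a).2 t u htu hum⟩

theorem exists_mem_cellsFull_orderStat {m n : ℕ} (hf : ∀ a, IncFull m n (f a)) {a : ι}
    {c : ℕ × ℕ} (hc : c ∈ cellsFull m (f a)) :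
    ∃ j < Fintype.card ι, c ∈ cellsFull m (orderStat f j) := by
  classical
  obtain ⟨k, x⟩ := c
  obtain ⟨hk, hkm, hxk, hkx⟩ := hc
  dsimp only at hk hkm hxk hkx
  set below := ({b | f b k < x} : Finset ι)
  have ha : a ∉ below := by simp [below, hkx]
  have hsub : insert a below ⊆ ({b | f b (k - 1) ≤ x} : Finset ι) := by
    intro b hb
    rcases mem_insert.1 hb with rfl | hb
    · simpa using hxk
    · have := (hf b).2 (k - 1) k (by omega) hkm
      simp only [below, mem_filter_univ] at hb ⊢
      omega
  have hbelow : #below < #({b | f b (k - 1) ≤ x} : Finset ι) := by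
    simpa [card_insert_of_notMem ha] using card_le_card hsub
  have hj : #below < Fintype.card ι := hbelow.trans_le (card_le_univ _)
  refine ⟨#below, hj, hk, hkm, (orderStat_le_iff hj).2 hbelow, ?_⟩
  exact not_lt.1 fun h => (lt_irrefl _) ((orderStat_lt_iff hj).1 h)

end OrderStatistic

section Normalization

variable {m n : ℕ}

theorem IncFull.update_zero {f : ℕ → ℕ} (hf : IncFull m n f) :
    IncFull m n (Function.update f 0 1) := by
  have h0 := hf.1 0 (Nat.zero_le _)
  refine ⟨fun t ht => ?_, fun t u htu hum => ?_⟩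
  · rcases eq_or_ne t 0 with rfl | h
    · simp; omega
    · simpa [h] using hf.1 t ht
  · rcases eq_or_ne t 0 with rfl | ht
    · rcases eq_or_ne u 0 with rfl | hu
      · simp
      · simpa [hu] using (hf.1 u hum).1
    · simpa [ht, show u ≠ 0 by omega] using hf.2 t u htu hum

theorem cellsFull_subset_update_zero {f : ℕ → ℕ} (hf : IncFull m n f) :
    cellsFull m f ⊆ cellsFull m (Function.update f 0 1) := by
  rintro ⟨k, x⟩ ⟨hk, hkm, hxk, hkx⟩
  dsimp only at hk hkm hxk hkx
  have h1 := (hf.1 (k - 1) (by omega)).1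
  refine ⟨hk, hkm, ?_, by simpa [show k ≠ 0 by omega] using hkx⟩
  rcases eq_or_ne (k - 1) 0 with h | h
  · simp only [h, Function.update_self]; omega
  · simpa [h] using hxk

theorem IncFull.max_const {f : ℕ → ℕ} (hf : IncFull m n f) {c : ℕ} (hc : c ≤ n) :
    IncFull m n fun t => max (f t) c :=
  ⟨fun t ht => ⟨(hf.1 t ht).1.trans (le_max_left _ _), max_le (hf.1 t ht).2 hc⟩,
    fun t u htu hum => max_le_max (hf.2 t u htu hum) le_rfl⟩

theorem subset_cellsFull_max_succ {i : ℕ} {s : Fin i → ℕ → ℕ}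
    (hsorted : ∀ t, Monotone fun j => s j t) (hs : ∀ j, IncFull m n (s j)) :
    ⋃ j, cellsFull m (s j) ⊆ ⋃ j : Fin i, cellsFull m fun t => max (s j t) (j + 1) := by
  simp only [Set.iUnion_subset_iff]
  rintro j ⟨k, x⟩ ⟨hk, hkm, hxk, hkx⟩
  dsimp only at hk hkm hxk hkx
  simp only [Set.mem_iUnion]
  by_cases hjx : (j : ℕ) + 1 ≤ x
  · exact ⟨j, hk, hkm, max_le hxk hjx, hkx.trans (le_max_left _ _)⟩
  · have hx := (hs j).1 (k - 1) (by omega)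
    -- the member of index `x - 1 < j` starts below `x` and is raised to exactly `x`
    let j' : Fin i := ⟨x - 1, by omega⟩
    have hj'j : j' ≤ j := Fin.mk_le_mk.2 (by omega)
    refine ⟨j', hk, hkm, max_le ((hsorted (k - 1) hj'j).trans hxk) (by simp [j']; omega), ?_⟩
    exact le_max_of_le_right (by simp [j']; omega)

theorem exists_incFull_family_normalized {i : ℕ} (hin : i ≤ n) (f : Fin i → ℕ → ℕ)
    (hf : ∀ a, IncFull m n (f a)) :
    ∃ g : Fin i → ℕ → ℕ, (∀ a, IncFull m n (g a)) ∧ (∀ a, g a 0 = a + 1) ∧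
      ⋃ a, cellsFull m (f a) ⊆ ⋃ a, cellsFull m (g a) := by
  set f₀ : Fin i → ℕ → ℕ := fun a => Function.update (f a) 0 1
  have hf₀ : ∀ a, IncFull m n (f₀ a) := fun a => (hf a).update_zero
  have hcard : ∀ j : Fin i, (j : ℕ) < Fintype.card (Fin i) := fun j => by simp
  set s : Fin i → ℕ → ℕ := fun j => orderStat f₀ j
  have hs : ∀ j, IncFull m n (s j) := fun j => incFull_orderStat hf₀ (hcard j)
  have hs0 : ∀ j, s j 0 = 1 := fun j =>
    le_antisymm (orderStat_le_of_forall_le (hcard j) fun a => by simp [f₀])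
      (le_orderStat_of_forall_le (hcard j) fun a => by simp [f₀])
  have hsorted : ∀ t, Monotone fun j => s j t := fun t j j' hjj' =>
    orderStat_mono_index hjj' (hcard j') t
  have hfs : ⋃ a, cellsFull m (f a) ⊆ ⋃ j, cellsFull m (s j) := by
    simp only [Set.iUnion_subset_iff]
    intro a c hc
    obtain ⟨j, hj, hcj⟩ :=
      exists_mem_cellsFull_orderStat hf₀ (cellsFull_subset_update_zero (hf a) hc)
    exact Set.mem_iUnion.2 ⟨⟨j, by simpa using hj⟩, hcj⟩
  exact ⟨fun j t => max (s j t) (j + 1), fun j => (hs j).max_const (by omega),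
    fun j => by simp [hs0], hfs.trans (subset_cellsFull_max_succ hsorted hs)⟩

end Normalization

namespace MonoPoly

variable {m n : ℕ}

def reflect (Q : MonoPoly m n) : MonoPoly m n where
  r := Q.r
  s := Q.s
  P t := n + 1 - Q.P t
  one_le_r := Q.one_le_r
  r_le_s := Q.r_le_s
  s_le_m := Q.s_le_m
  val_mem t h₁ h₂ := by have := Q.val_mem t h₁ h₂; omega
  mono := Q.mono.symm.imp (fun h t u h₁ h₂ h₃ => Nat.sub_le_sub_left (h t u h₁ h₂ h₃) _)
    (fun h t u h₁ h₂ h₃ => Nat.sub_le_sub_left (h t u h₁ h₂ h₃) _)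

theorem Decreasing.reflect {Q : MonoPoly m n} (hQ : Q.Decreasing) : Q.reflect.Increasing :=
  fun t u h₁ h₂ h₃ => Nat.sub_le_sub_left (hQ t u h₁ h₂ h₃) _

theorem Increasing.reflect {Q : MonoPoly m n} (hQ : Q.Increasing) : Q.reflect.Decreasing :=
  fun t u h₁ h₂ h₃ => Nat.sub_le_sub_left (hQ t u h₁ h₂ h₃) _

theorem mem_reflect_cells {Q : MonoPoly m n} {k l : ℕ} (h : (k, l) ∈ Q.cells) :
    (k, n + 1 - l) ∈ Q.reflect.cells := by
  obtain ⟨hr, hs, hmin, hmax⟩ := h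
  have h₁ := Q.val_mem (k - 1) (by omega) (by omega)
  have h₂ := Q.val_mem k (by omega) hs
  refine ⟨hr, hs, ?_, ?_⟩ <;> simp only [reflect, min_le_iff, le_max_iff] at hmin hmax ⊢ <;>
    omega

theorem Increasing.exists_incFull {Q : MonoPoly m n} (hQ : Q.Increasing) :
    ∃ f, IncFull m n f ∧ Q.cells ⊆ cellsFull m f := by
  have := Q.one_le_r
  have := Q.r_le_s
  have := Q.s_le_m
  refine ⟨fun t => Q.P (max (Q.r - 1) (min t Q.s)),
    ⟨fun t _ => Q.val_mem _ (by omega) (by omega),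
      fun t u _ _ => hQ _ _ (by omega) (by omega) (by omega)⟩, ?_⟩
  rintro ⟨k, l⟩ ⟨hr, hs, hmin, hmax⟩
  have hP := hQ (k - 1) k (by omega) (by omega) hs
  dsimp only at hr hs hmin hmax
  have e₁ : max (Q.r - 1) (min k Q.s) = k := by omega
  have e₂ : max (Q.r - 1) (min (k - 1) Q.s) = k - 1 := by omega
  refine ⟨by omega, hs.trans Q.s_le_m, ?_, ?_⟩ <;> simp only [e₁, e₂] <;> omega

def ofIncFull {f : ℕ → ℕ} (hm : 1 ≤ m) (hf : IncFull m n f) : MonoPoly m n where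
  r := 1
  s := m
  P := f
  one_le_r := le_rfl
  r_le_s := hm
  s_le_m := le_rfl
  val_mem t _ ht := hf.1 t ht
  mono := Or.inl fun t u _ => hf.2 t u

theorem ofIncFull_increasing {f : ℕ → ℕ} (hm : 1 ≤ m) (hf : IncFull m n f) :
    (ofIncFull hm hf).Increasing :=
  fun t u _ => hf.2 t u

theorem cells_ofIncFull {f : ℕ → ℕ} (hm : 1 ≤ m) (hf : IncFull m n f) :
    (ofIncFull hm hf).cells = cellsFull m f := by
  ext ⟨k, l⟩
  simp only [cells, cellsFull, ofIncFull, Set.mem_ofPred_eq]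
  constructor
  · rintro ⟨hk, hkm, hmin, hmax⟩
    have hP := hf.2 (k - 1) k (by omega) hkm
    exact ⟨hk, hkm, min_eq_left hP ▸ hmin, max_eq_right hP ▸ hmax⟩
  · rintro ⟨hk, hkm, hlo, hhi⟩
    exact ⟨hk, hkm, min_le_of_left_le hlo, le_max_of_le_right hhi⟩

end MonoPoly

theorem stmt12_general (m n i d : ℕ) (hm : 1 ≤ m) (hnid : i + d ≤ n)
    (h : ∃ (F : Fin i → MonoPoly m n) (G : Fin d → MonoPoly m n),
        IsIDCovering m n i d F G) :
    ∃ (F : Fin i → MonoPoly m n) (G : Fin d → MonoPoly m n),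
      IsIDCovering m n i d F G ∧
      (∀ a : Fin i, (F a).Full ∧ (F a).P 0 = a.val + 1) ∧
      (∀ b : Fin d, (G b).Full ∧ (G b).P 0 = n - b.val) := by
  obtain ⟨F₀, G₀, hF₀, hG₀, hcov⟩ := h
  choose f hf hFf using fun a => (hF₀ a).exists_incFull
  choose f' hf' hGf' using fun b => (hG₀ b).reflect.exists_incFull
  obtain ⟨g, hg, hg0, hfg⟩ := exists_incFull_family_normalized (by omega : i ≤ n) f hf
  obtain ⟨g', hg', hg'0, hfg'⟩ := exists_incFull_family_normalized (by omega : d ≤ n) f' hf'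
  refine ⟨fun a => MonoPoly.ofIncFull hm (hg a),
    fun b => (MonoPoly.ofIncFull hm (hg' b)).reflect,
    ⟨fun a => MonoPoly.ofIncFull_increasing hm (hg a),
      fun b => (MonoPoly.ofIncFull_increasing hm (hg' b)).reflect, fun k l hk hkm hl hln => ?_⟩,
    fun a => ⟨⟨rfl, rfl⟩, hg0 a⟩,
    fun b => ⟨⟨rfl, rfl⟩, by
      simp only [MonoPoly.reflect, MonoPoly.ofIncFull, hg'0]; omega⟩⟩
  rcases hcov k l hk hkm hl hln with ⟨a, hkl⟩ | ⟨b, hkl⟩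
  · obtain ⟨a', h'⟩ := Set.mem_iUnion.1 (hfg (Set.mem_iUnion_of_mem a (hFf a hkl)))
    exact Or.inl ⟨a', by rwa [MonoPoly.cells_ofIncFull]⟩
  · have hkl' := hGf' b (MonoPoly.mem_reflect_cells hkl)
    obtain ⟨b', h'⟩ := Set.mem_iUnion.1 (hfg' (Set.mem_iUnion_of_mem b hkl'))
    rw [← MonoPoly.cells_ofIncFull hm (hg' b')] at h'
    refine Or.inr ⟨b', ?_⟩
    simpa [show n + 1 - (n + 1 - l) = l by omega] using MonoPoly.mem_reflect_cells h'

/-- If `m, n ≥ 1`, `n ≥ i + d` and `R_{m×n}` admits an `(i,d)`-covering, then it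
admits one with all tiles fully defined on `{0,…,m}` such that `I_j(0) = j` for
`1 ≤ j ≤ i` and `D_k(0) = n + 1 - k` for `1 ≤ k ≤ d`. -/
theorem stmt12 (m n i d : ℕ) (hm : 1 ≤ m) (hn : 1 ≤ n) (hnid : i + d ≤ n)
    (h : ∃ (F : Fin i → MonoPoly m n) (G : Fin d → MonoPoly m n),
        IsIDCovering m n i d F G) :
    ∃ (F : Fin i → MonoPoly m n) (G : Fin d → MonoPoly m n),
      IsIDCovering m n i d F G ∧
      (∀ a : Fin i, (F a).Full ∧ (F a).P 0 = a.val + 1) ∧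
      (∀ b : Fin d, (G b).Full ∧ (G b).P 0 = n - b.val) :=
  stmt12_general m n i d hm hnid h
end
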